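/- Let (B,X,⊲,⊲',*) be a shadow biquandle such that X is strongly connected, and define [x,y,z] = y*((x↘z) ⊲' (x↘y)) for x,y,z∈X. Then for all x,y,z,w∈X: [y,[x,y,z],[x,y,w]] = [z,[x,y,z],[x,z,w]] = [w,[x,y,w],[x,z,w]]. -/

import Mathlib

/-- A biquandle: a set `B` with two binary operations `ut` (the under operation `⊲`)
and `ot` (the over operation `⊲'`) satisfying the biquandle axioms. -/
structure Biquandle (B : Type*) where
  ut : B → B → B
  ot : B → B → B
  diag : ∀ a, ut a a = ot a a
  ut_bij : ∀ b, Function.Bijective fun a => ut a b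
  ot_bij : ∀ b, Function.Bijective fun a => ot a b
  S_bij : Function.Bijective fun p : B × B => (ot p.2 p.1, ut p.1 p.2)
  ex1 : ∀ a b c, ut (ut a b) (ut c b) = ut (ut a c) (ot b c)
  ex2 : ∀ a b c, ot (ut a b) (ut c b) = ut (ot a c) (ot b c)
  ex3 : ∀ a b c, ot (ot a b) (ot c b) = ot (ot a c) (ut b c)

/-- The inverse `a ⊲⁻¹ b` of the bijection `·⊲b` of a biquandle. -/
noncomputable def Biquandle.utInv {B : Type*} (bq : Biquandle B) (a b : B) : B :=
  (Equiv.ofBijective _ (bq.ut_bij b)).symm a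

/-- The inverse `a ⊲'⁻¹ b` of the bijection `·⊲'b` of a biquandle. -/
noncomputable def Biquandle.otInv {B : Type*} (bq : Biquandle B) (a b : B) : B :=
  (Equiv.ofBijective _ (bq.ot_bij b)).symm a

/-- A `B`-set for a biquandle `bq` on `B`: a set `X` with an action `act = *`
such that each `·*a` is a bijection of `X` and `(x*a)*(b⊲'a) = (x*b)*(a⊲b)`. -/
structure BSet {B : Type*} (bq : Biquandle B) (X : Type*) where
  act : X → B → X
  act_bij : ∀ a, Function.Bijective fun x => act x a
  compat : ∀ x a b, act (act x a) (bq.ot b a) = act (act x b) (bq.ut a b)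

/-- The inverse `x *⁻¹ a` of the bijection `·*a` of a `B`-set. -/
noncomputable def BSet.actInv {B : Type*} {bq : Biquandle B} {X : Type*}
    (bs : BSet bq X) (x : X) (a : B) : X :=
  (Equiv.ofBijective _ (bs.act_bij a)).symm x

/-- A `B`-set is strongly connected if for each `x` the map `a ↦ x*a` is a bijection `B → X`. -/
def BSet.StronglyConnected {B : Type*} {bq : Biquandle B} {X : Type*} (bs : BSet bq X) : Prop :=
  ∀ x, Function.Bijective fun a => bs.act x a

/-- For a strongly connected `B`-set, `x ↘ y` is the unique `a ∈ B` with `x*a = y`. -/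
noncomputable def BSet.sd {B : Type*} {bq : Biquandle B} {X : Type*} (bs : BSet bq X)
    (h : bs.StronglyConnected) (x y : X) : B :=
  (Equiv.ofBijective _ (h x)).symm y

/-- The corresponding horizontal-tribracket of a shadow biquandle with strongly connected
`B`-set: `[x,y,z] = y*((x↘z) ⊲' (x↘y))`. -/
noncomputable def BSet.tribr {B X : Type*} {bq : Biquandle B} (bs : BSet bq X)
    (h : bs.StronglyConnected) (x y z : X) : X :=
  bs.act y (bq.ot (bs.sd h x z) (bs.sd h x y))

/-!
Write `a = x↘y`, `b = x↘z`, `c = x↘w`. The `B`-set axiom at `x` gives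
`[x,y,z] = y*(b⊲'a) = z*(a⊲b)`, so every `↘` occurring in the three brackets is a biquandle
expression in `a, b, c`. The first equation is then the third exchange law at `(c, a, b)`; after one
more use of the `B`-set axiom the second is the first exchange law at `(a, c, b)`.
-/

namespace BSet

variable {B X : Type*} {bq : Biquandle B} (bs : BSet bq X) (h : bs.StronglyConnected)

lemma act_sd (x y : X) : bs.act x (bs.sd h x y) = y :=
  (Equiv.ofBijective _ (h x)).apply_symm_apply y

lemma sd_act (x : X) (a : B) : bs.sd h x (bs.act x a) = a :=
  (Equiv.ofBijective _ (h x)).symm_apply_apply a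

lemma tribr_eq_act_ut (x y z : X) :
    bs.tribr h x y z = bs.act z (bq.ut (bs.sd h x y) (bs.sd h x z)) := by
  have := bs.compat x (bs.sd h x y) (bs.sd h x z)
  rwa [act_sd, act_sd] at this

lemma sd_tribr_left (x y z : X) :
    bs.sd h y (bs.tribr h x y z) = bq.ot (bs.sd h x z) (bs.sd h x y) :=
  bs.sd_act h y _

lemma sd_tribr_right (x y z : X) :
    bs.sd h z (bs.tribr h x y z) = bq.ut (bs.sd h x y) (bs.sd h x z) := by
  rw [tribr_eq_act_ut, sd_act]

end BSet

open BSet in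
/-- Theorem 4.1, axiom (H2): for the corresponding tribracket
`[x,y,z] = y*((x↘z) ⊲' (x↘y))` of a shadow biquandle with strongly connected `X`,
`[y,[x,y,z],[x,y,w]] = [z,[x,y,z],[x,z,w]] = [w,[x,y,w],[x,z,w]]` for all `x y z w ∈ X`. -/
theorem shadow_biquandle_tribracket_H2 {B X : Type*} (bq : Biquandle B)
    (bs : BSet bq X) (h : bs.StronglyConnected) :
    ∀ x y z w : X,
      bs.tribr h y (bs.tribr h x y z) (bs.tribr h x y w)
        = bs.tribr h z (bs.tribr h x y z) (bs.tribr h x z w) ∧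
      bs.tribr h z (bs.tribr h x y z) (bs.tribr h x z w)
        = bs.tribr h w (bs.tribr h x y w) (bs.tribr h x z w) := by
  intro x y z w
  set a := bs.sd h x y
  set b := bs.sd h x z
  set c := bs.sd h x w
  have hyz : bs.tribr h y (bs.tribr h x y z) (bs.tribr h x y w)
      = bs.act (bs.tribr h x y z) (bq.ot (bq.ot c a) (bq.ot b a)) := by
    rw [tribr, sd_tribr_left, sd_tribr_left]
  have hzy : bs.tribr h z (bs.tribr h x y z) (bs.tribr h x z w)
      = bs.act (bs.tribr h x y z) (bq.ot (bq.ot c b) (bq.ut a b)) := by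
    rw [tribr, sd_tribr_left, sd_tribr_right]
  have hzw : bs.tribr h z (bs.tribr h x y z) (bs.tribr h x z w)
      = bs.act (bs.tribr h x z w) (bq.ut (bq.ut a b) (bq.ot c b)) := by
    rw [hzy, tribr_eq_act_ut, bs.compat]
    rfl
  have hwz : bs.tribr h w (bs.tribr h x y w) (bs.tribr h x z w)
      = bs.act (bs.tribr h x z w) (bq.ut (bq.ut a c) (bq.ut b c)) := by
    rw [tribr, sd_tribr_right, sd_tribr_right, tribr_eq_act_ut, bs.compat, ← tribr_eq_act_ut]
  exact ⟨by rw [hyz, hzy, bq.ex3], by rw [hzw, hwz, bq.ex1]⟩
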